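/- Let Ω ⊂ ℝ³ be a bounded, open, connected set and let D₁, D₂, ε, ν, K > 0 be constants. Let c₁, c₂, Φ, p : ℝ × ℝ³ → ℝ and u : ℝ × ℝ³ → ℝ³ be smooth functions satisfying on [0,∞) × Ω the Nernst–Planck–Stokes system: ∂ₜc₁ + u·∇c₁ = D₁ div(∇c₁ + c₁∇Φ), ∂ₜc₂ + u·∇c₂ = D₂ div(∇c₂ − c₂∇Φ), −εΔΦ = c₁ − c₂, ∂ₜu − νΔu + ∇p = −K(c₁ − c₂)∇Φ, and div u = 0, with time-independent boundary conditions: for all t ≥ 0 and x ∈ ∂Ω, cᵢ(t,x) = γᵢ(x) with γᵢ : ∂Ω → ℝ continuous and γᵢ > 0, Φ(t,x) = W(x), and u(t,x) = 0. Assume c₁(0,·) ≥ 0 and c₂(0,·) ≥ 0 on closure(Ω). Set γ̲ = min over i of inf_{∂Ω} γᵢ and γ̄ = max over i of sup_{∂Ω} γᵢ. Then for i = 1,2, all t ≥ 0 and x ∈ closure(Ω): min{inf_Ω c₁(0,·), inf_Ω c₂(0,·), γ̲} ≤ cᵢ(t,x) ≤ max{sup_Ω c₁(0,·), sup_Ω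 c₂(0,·), γ̄}; moreover M̄(t) = max over i of sup_{x∈Ω} cᵢ(t,x) is nonincreasing on (0,∞) and M̲(t) = min over i of inf_{x∈Ω} cᵢ(t,x) is nondecreasing on (0,∞). -/

import Mathlib

/-- Partial derivative in the `i`-th coordinate direction. -/
noncomputable def pd (i : Fin 3) (f : (Fin 3 → ℝ) → ℝ) (x : Fin 3 → ℝ) : ℝ :=
  fderiv ℝ f x (Pi.single i 1)

/-- Laplacian of a scalar function on `ℝ³`. -/
noncomputable def lap (f : (Fin 3 → ℝ) → ℝ) (x : Fin 3 → ℝ) : ℝ :=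
  ∑ i, pd i (fun y => pd i f y) x

open Set Filter Topology ContDiff

section Helpers

lemma aux_le1 : (∞ : WithTop ℕ∞) ≠ 0 := by simp

lemma pd_smooth {f : (Fin 3 → ℝ) → ℝ} (hf : ContDiff ℝ ∞ f) (i : Fin 3) :
    ContDiff ℝ ∞ (pd i f) :=
  (hf.fderiv_right (le_of_eq (by rfl))).clm_apply contDiff_const

lemma pd_add {f g : (Fin 3 → ℝ) → ℝ} {x : Fin 3 → ℝ} (hf : DifferentiableAt ℝ f x)
    (hg : DifferentiableAt ℝ g x) (i : Fin 3) :
    pd i (fun y => f y + g y) x = pd i f x + pd i g x := by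
  simp only [pd, fderiv_fun_add hf hg, ContinuousLinearMap.add_apply]

lemma pd_mul {f g : (Fin 3 → ℝ) → ℝ} {x : Fin 3 → ℝ} (hf : DifferentiableAt ℝ f x)
    (hg : DifferentiableAt ℝ g x) (i : Fin 3) :
    pd i (fun y => f y * g y) x = f x * pd i g x + g x * pd i f x := by
  simp only [pd, fderiv_fun_mul hf hg, ContinuousLinearMap.add_apply,
    ContinuousLinearMap.smul_apply, smul_eq_mul]

lemma pd_const_mul {f : (Fin 3 → ℝ) → ℝ} {x : Fin 3 → ℝ} (hf : DifferentiableAt ℝ f x)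
    (a : ℝ) (i : Fin 3) : pd i (fun y => a * f y) x = a * pd i f x := by
  simp only [pd, fderiv_const_mul hf a, ContinuousLinearMap.smul_apply, smul_eq_mul]

lemma pd_neg {f : (Fin 3 → ℝ) → ℝ} {x : Fin 3 → ℝ} (i : Fin 3) :
    pd i (fun y => -f y) x = -pd i f x := by
  simp only [pd, fderiv_fun_neg, ContinuousLinearMap.neg_apply]

/-- Second derivative test, 1-D: at a local max of a smooth function, `h'' ≤ 0`. -/
lemma second_deriv_nonpos {h : ℝ → ℝ} (hh : ContDiff ℝ ∞ h) (hmax : IsLocalMax h 0) :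
    deriv (deriv h) 0 ≤ 0 := by
  by_contra hpos
  push_neg at hpos
  have hd1 : ContDiff ℝ ∞ (deriv h) := (contDiff_infty_iff_deriv.mp hh).2
  have hd2 : Continuous (deriv (deriv h)) :=
    ((contDiff_infty_iff_deriv.mp hd1).2).continuous
  have hev : ∀ᶠ s in 𝓝 (0:ℝ), 0 < deriv (deriv h) s :=
    hd2.continuousAt.eventually (eventually_gt_nhds hpos)
  obtain ⟨δ₁, hδ₁, hball₁⟩ := Metric.eventually_nhds_iff.mp hev
  obtain ⟨δ₂, hδ₂, hball₂⟩ := Metric.eventually_nhds_iff.mp hmax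
  set δ := min δ₁ δ₂ with hδdef
  have hδ : 0 < δ := lt_min hδ₁ hδ₂
  have hmono : StrictMonoOn (deriv h) (Ioo (-δ) δ) := by
    apply strictMonoOn_of_deriv_pos (convex_Ioo _ _) hd1.continuous.continuousOn
    intro s hs
    rw [interior_Ioo] at hs
    apply hball₁
    rw [Real.dist_eq, sub_zero]
    exact lt_of_lt_of_le (abs_lt.mpr ⟨hs.1, hs.2⟩) (min_le_left _ _)
  have hd0 : deriv h 0 = 0 := hmax.deriv_eq_zero
  have hpos' : ∀ s ∈ Ioo (0:ℝ) δ, 0 < deriv h s := by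
    intro s hs
    have h1 : (0:ℝ) ∈ Ioo (-δ) δ := ⟨neg_lt_zero.mpr hδ, hδ⟩
    have h2 : s ∈ Ioo (-δ) δ := ⟨lt_trans (neg_lt_zero.mpr hδ) hs.1, hs.2⟩
    have := hmono h1 h2 hs.1
    rwa [hd0] at this
  have hmono2 : StrictMonoOn h (Ico 0 δ) := by
    apply strictMonoOn_of_deriv_pos (convex_Ico _ _) hh.continuous.continuousOn
    intro s hs
    rw [interior_Ico] at hs
    exact hpos' s hs
  have hlt : h 0 < h (δ/2) :=
    hmono2 ⟨le_refl 0, hδ⟩ ⟨by linarith, by linarith⟩ (by linarith)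
  have hle : h (δ/2) ≤ h 0 := by
    apply hball₂
    rw [Real.dist_eq, sub_zero, abs_of_pos (by linarith)]
    have : δ ≤ δ₂ := min_le_right _ _
    linarith
  linarith

/-- At an interior local maximum, each pure second partial derivative is `≤ 0`. -/
lemma pd2_nonpos {f : (Fin 3 → ℝ) → ℝ} (hf : ContDiff ℝ ∞ f) {x : Fin 3 → ℝ}
    (hmax : IsLocalMax f x) (i : Fin 3) : pd i (fun y => pd i f y) x ≤ 0 := by
  set e : Fin 3 → ℝ := Pi.single i 1 with he
  set L : ℝ → (Fin 3 → ℝ) := fun s => x + s • e with hL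
  have hLc : ContDiff ℝ ∞ L := contDiff_const.add (contDiff_id.smul contDiff_const)
  have hL0 : L 0 = x := by simp [hL]
  have hLd : ∀ s, HasDerivAt L e s := by
    intro s
    have h1 : HasDerivAt (fun s : ℝ => s • e) ((1:ℝ) • e) s := (hasDerivAt_id s).smul_const e
    simpa [one_smul, hL] using h1.const_add x
  have hcomp : ContDiff ℝ ∞ (f ∘ L) := hf.comp hLc
  have hderiv : deriv (f ∘ L) = fun s => pd i f (L s) := by
    funext s
    exact ((hf.differentiable aux_le1 (L s)).hasFDerivAt.comp_hasDerivAt s (hLd s)).deriv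
  have hderiv2 : deriv (deriv (f ∘ L)) 0 = pd i (fun y => pd i f y) x := by
    rw [hderiv]
    have := (((pd_smooth hf i).differentiable aux_le1
      (L 0)).hasFDerivAt.comp_hasDerivAt 0 (hLd 0)).deriv
    rw [hL0] at this
    exact this
  have hmax' : IsLocalMax (f ∘ L) 0 := by
    have ht : Tendsto L (𝓝 0) (𝓝 (L 0)) := hLc.continuous.continuousAt
    rw [hL0] at ht
    have hm : IsMaxFilter f (𝓝 x) (L 0) := by rw [hL0]; exact hmax
    exact hm.comp_tendsto ht
  rw [← hderiv2]
  exact second_deriv_nonpos hcomp hmax'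

lemma pd2_nonneg {f : (Fin 3 → ℝ) → ℝ} (hf : ContDiff ℝ ∞ f) {x : Fin 3 → ℝ}
    (hmin : IsLocalMin f x) (i : Fin 3) : 0 ≤ pd i (fun y => pd i f y) x := by
  have h1 : pd i (fun y => pd i (fun z => -f z) y) x ≤ 0 := pd2_nonpos hf.neg hmin.neg i
  have h2 : (fun y => pd i (fun z => -f z) y) = fun y => -(pd i f y) := by
    funext y; exact pd_neg i
  rw [h2] at h1
  rw [pd_neg i] at h1
  linarith

lemma lap_nonpos_of_max {f : (Fin 3 → ℝ) → ℝ} (hf : ContDiff ℝ ∞ f) {x : Fin 3 → ℝ}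
    (hmax : IsLocalMax f x) : lap f x ≤ 0 :=
  Finset.sum_nonpos (fun i _ => pd2_nonpos hf hmax i)

lemma lap_nonneg_of_min {f : (Fin 3 → ℝ) → ℝ} (hf : ContDiff ℝ ∞ f) {x : Fin 3 → ℝ}
    (hmin : IsLocalMin f x) : 0 ≤ lap f x :=
  Finset.sum_nonneg (fun i _ => pd2_nonneg hf hmin i)

lemma deriv_nonpos_of_left_min {φ : ℝ → ℝ} {a t : ℝ} (hφ : DifferentiableAt ℝ φ t)
    (hat : a < t) (hmin : ∀ s ∈ Icc a t, φ t ≤ φ s) : deriv φ t ≤ 0 := by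
  have hder := hφ.hasDerivAt
  rw [hasDerivAt_iff_tendsto_slope] at hder
  have h1 : Tendsto (slope φ t) (𝓝[<] t) (𝓝 (deriv φ t)) :=
    hder.mono_left (nhdsWithin_mono _ (fun y hy => ne_of_lt hy))
  refine le_of_tendsto h1 ?_
  filter_upwards [Ioo_mem_nhdsLT_of_mem ⟨hat, le_refl t⟩] with s hs
  have h2 : φ t ≤ φ s := hmin s ⟨le_of_lt hs.1, le_of_lt hs.2⟩
  rw [slope_def_field]
  rw [div_nonpos_iff]
  exact Or.inl ⟨by linarith, by linarith [hs.2]⟩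

lemma deriv_nonneg_of_left_max {φ : ℝ → ℝ} {a t : ℝ} (hφ : DifferentiableAt ℝ φ t)
    (hat : a < t) (hmax : ∀ s ∈ Icc a t, φ s ≤ φ t) : 0 ≤ deriv φ t := by
  have h1 : deriv (fun s => -φ s) t ≤ 0 :=
    deriv_nonpos_of_left_min hφ.neg hat (fun s hs => neg_le_neg (hmax s hs))
  rw [deriv.fun_neg] at h1
  linarith

lemma exists_sSup_closure {Ω : Set (Fin 3 → ℝ)} (hne : Ω.Nonempty)
    (hb : Bornology.IsBounded Ω) {f : (Fin 3 → ℝ) → ℝ} (hf : Continuous f) :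
    ∃ x₀ ∈ closure Ω, (∀ x ∈ closure Ω, f x ≤ f x₀) ∧ sSup (f '' Ω) = f x₀ := by
  have hcpt : IsCompact (closure Ω) :=
    Metric.isCompact_of_isClosed_isBounded isClosed_closure hb.closure
  obtain ⟨x₀, hx₀, hmax⟩ := hcpt.exists_isMaxOn hne.closure hf.continuousOn
  have hmax' : ∀ x ∈ closure Ω, f x ≤ f x₀ := fun x hx => hmax hx
  refine ⟨x₀, hx₀, hmax', ?_⟩
  have hub : ∀ y ∈ f '' Ω, y ≤ f x₀ := by
    rintro y ⟨x, hx, rfl⟩; exact hmax' x (subset_closure hx)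
  have hle : sSup (f '' Ω) ≤ f x₀ := csSup_le (hne.image f) hub
  have hge : f x₀ ≤ sSup (f '' Ω) := by
    have h1 : f x₀ ∈ closure (f '' Ω) :=
      image_closure_subset_closure_image hf ⟨x₀, hx₀, rfl⟩
    have h2 : closure (f '' Ω) ⊆ Iic (sSup (f '' Ω)) :=
      closure_minimal (fun y hy => le_csSup ⟨f x₀, hub⟩ hy) isClosed_Iic
    exact h2 h1
  linarith

lemma exists_sInf_closure {Ω : Set (Fin 3 → ℝ)} (hne : Ω.Nonempty)
    (hb : Bornology.IsBounded Ω) {f : (Fin 3 → ℝ) → ℝ} (hf : Continuous f) :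
    ∃ x₀ ∈ closure Ω, (∀ x ∈ closure Ω, f x₀ ≤ f x) ∧ sInf (f '' Ω) = f x₀ := by
  have hcpt : IsCompact (closure Ω) :=
    Metric.isCompact_of_isClosed_isBounded isClosed_closure hb.closure
  obtain ⟨x₀, hx₀, hmin⟩ := hcpt.exists_isMinOn hne.closure hf.continuousOn
  have hmin' : ∀ x ∈ closure Ω, f x₀ ≤ f x := fun x hx => hmin hx
  refine ⟨x₀, hx₀, hmin', ?_⟩
  have hub : ∀ y ∈ f '' Ω, f x₀ ≤ y := by
    rintro y ⟨x, hx, rfl⟩; exact hmin' x (subset_closure hx)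
  have hle : f x₀ ≤ sInf (f '' Ω) := le_csInf (hne.image f) hub
  have hge : sInf (f '' Ω) ≤ f x₀ := by
    have h1 : f x₀ ∈ closure (f '' Ω) :=
      image_closure_subset_closure_image hf ⟨x₀, hx₀, rfl⟩
    have h2 : closure (f '' Ω) ⊆ Ici (sInf (f '' Ω)) :=
      closure_minimal (fun y hy => csInf_le ⟨f x₀, hub⟩ hy) isClosed_Ici
    exact h2 h1
  linarith

lemma mem_Omega_or_frontier {Ω : Set (Fin 3 → ℝ)} (hΩo : IsOpen Ω) {x : Fin 3 → ℝ}
    (hx : x ∈ closure Ω) : x ∈ Ω ∨ x ∈ frontier Ω := by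
  by_cases h : x ∈ Ω
  · exact Or.inl h
  · exact Or.inr ⟨hx, by rwa [hΩo.interior_eq]⟩

end Helpers

/-- **Theorem 3.1 (I).** Maximum/minimum principle for the ionic concentrations
of the Nernst–Planck–Stokes system with Dirichlet boundary conditions: the
concentrations stay between the extrema of the initial and boundary data, and
`M̄(t) = maxᵢ sup_Ω cᵢ(t,·)`, `M̲(t) = minᵢ inf_Ω cᵢ(t,·)` are respectively
nonincreasing and nondecreasing on `(0,∞)`. -/
theorem NPS_max_principle
    (Ω : Set (Fin 3 → ℝ)) (hΩo : IsOpen Ω) (hΩc : IsConnected Ω)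
    (hΩb : Bornology.IsBounded Ω)
    (D₁ D₂ ε ν K : ℝ) (hD₁ : 0 < D₁) (hD₂ : 0 < D₂) (hε : 0 < ε)
    (hν : 0 < ν) (hK : 0 < K)
    (c₁ c₂ Φ p : ℝ × (Fin 3 → ℝ) → ℝ) (u : ℝ × (Fin 3 → ℝ) → Fin 3 → ℝ)
    (hc₁s : ContDiff ℝ (⊤ : ℕ∞) c₁) (hc₂s : ContDiff ℝ (⊤ : ℕ∞) c₂) (hΦs : ContDiff ℝ (⊤ : ℕ∞) Φ)
    (hps : ContDiff ℝ (⊤ : ℕ∞) p) (hus : ContDiff ℝ (⊤ : ℕ∞) u)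
    -- ∂ₜc₁ + u·∇c₁ = D₁ div(∇c₁ + c₁∇Φ)
    (heq₁ : ∀ t ≥ (0:ℝ), ∀ x ∈ Ω,
      deriv (fun s => c₁ (s, x)) t + ∑ i, u (t, x) i * pd i (fun y => c₁ (t, y)) x =
        D₁ * ∑ i, pd i (fun y =>
          pd i (fun z => c₁ (t, z)) y + c₁ (t, y) * pd i (fun z => Φ (t, z)) y) x)
    -- ∂ₜc₂ + u·∇c₂ = D₂ div(∇c₂ − c₂∇Φ)
    (heq₂ : ∀ t ≥ (0:ℝ), ∀ x ∈ Ω,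
      deriv (fun s => c₂ (s, x)) t + ∑ i, u (t, x) i * pd i (fun y => c₂ (t, y)) x =
        D₂ * ∑ i, pd i (fun y =>
          pd i (fun z => c₂ (t, z)) y - c₂ (t, y) * pd i (fun z => Φ (t, z)) y) x)
    -- −εΔΦ = c₁ − c₂
    (hpois : ∀ t ≥ (0:ℝ), ∀ x ∈ Ω,
      -(ε * lap (fun y => Φ (t, y)) x) = c₁ (t, x) - c₂ (t, x))
    -- ∂ₜu − νΔu + ∇p = −K(c₁ − c₂)∇Φ, componentwise
    (hstokes : ∀ t ≥ (0:ℝ), ∀ x ∈ Ω, ∀ k : Fin 3,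
      deriv (fun s => u (s, x) k) t - ν * lap (fun y => u (t, y) k) x
          + pd k (fun y => p (t, y)) x =
        -(K * (c₁ (t, x) - c₂ (t, x)) * pd k (fun y => Φ (t, y)) x))
    -- div u = 0
    (hdiv : ∀ t ≥ (0:ℝ), ∀ x ∈ Ω, ∑ i, pd i (fun y => u (t, y) i) x = 0)
    (γ₁ γ₂ W : (Fin 3 → ℝ) → ℝ)
    (hγ₁c : ContinuousOn γ₁ (frontier Ω)) (hγ₂c : ContinuousOn γ₂ (frontier Ω))
    (hγ₁p : ∀ x ∈ frontier Ω, 0 < γ₁ x) (hγ₂p : ∀ x ∈ frontier Ω, 0 < γ₂ x)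
    (hbc₁ : ∀ t ≥ (0:ℝ), ∀ x ∈ frontier Ω, c₁ (t, x) = γ₁ x)
    (hbc₂ : ∀ t ≥ (0:ℝ), ∀ x ∈ frontier Ω, c₂ (t, x) = γ₂ x)
    (hbcΦ : ∀ t ≥ (0:ℝ), ∀ x ∈ frontier Ω, Φ (t, x) = W x)
    (hbcu : ∀ t ≥ (0:ℝ), ∀ x ∈ frontier Ω, u (t, x) = 0)
    (hc₁0 : ∀ x ∈ closure Ω, 0 ≤ c₁ (0, x))
    (hc₂0 : ∀ x ∈ closure Ω, 0 ≤ c₂ (0, x)) :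
    (∀ t ≥ (0:ℝ), ∀ x ∈ closure Ω, ∀ c ∈ ({c₁, c₂} : Set (ℝ × (Fin 3 → ℝ) → ℝ)),
      min (min (sInf ((fun y => c₁ (0, y)) '' Ω)) (sInf ((fun y => c₂ (0, y)) '' Ω)))
          (min (sInf (γ₁ '' frontier Ω)) (sInf (γ₂ '' frontier Ω))) ≤ c (t, x)
      ∧ c (t, x) ≤
        max (max (sSup ((fun y => c₁ (0, y)) '' Ω)) (sSup ((fun y => c₂ (0, y)) '' Ω)))
          (max (sSup (γ₁ '' frontier Ω)) (sSup (γ₂ '' frontier Ω))))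
    ∧ AntitoneOn
        (fun t => max (sSup ((fun y => c₁ (t, y)) '' Ω)) (sSup ((fun y => c₂ (t, y)) '' Ω)))
        (Set.Ioi (0:ℝ))
    ∧ MonotoneOn
        (fun t => min (sInf ((fun y => c₁ (t, y)) '' Ω)) (sInf ((fun y => c₂ (t, y)) '' Ω)))
        (Set.Ioi (0:ℝ)) := by
  -- downgrade smoothness from `ω` (or whatever `⊤` is) to `∞`
  have hc₁ : ContDiff ℝ ∞ c₁ := hc₁s.of_le (by simp)
  have hc₂ : ContDiff ℝ ∞ c₂ := hc₂s.of_le (by simp)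
  have hΦ : ContDiff ℝ ∞ Φ := hΦs.of_le (by simp)
  have hΩne : Ω.Nonempty := hΩc.nonempty
  -- slices
  have slice_x : ∀ (c : ℝ × (Fin 3 → ℝ) → ℝ), ContDiff ℝ ∞ c →
      ∀ t : ℝ, ContDiff ℝ ∞ (fun y => c (t, y)) :=
    fun c hc t => hc.comp (contDiff_const.prodMk contDiff_id)
  have slice_t : ∀ (c : ℝ × (Fin 3 → ℝ) → ℝ), ContDiff ℝ ∞ c →
      ∀ x : Fin 3 → ℝ, ContDiff ℝ ∞ (fun s => c (s, x)) :=
    fun c hc x => hc.comp (contDiff_id.prodMk contDiff_const)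
  -- pointwise bounds via sup/inf over the closure
  have hle_sSup : ∀ t : ℝ, ∀ (c : ℝ × (Fin 3 → ℝ) → ℝ), ContDiff ℝ ∞ c →
      ∀ x ∈ closure Ω, c (t, x) ≤ sSup ((fun y => c (t, y)) '' Ω) := by
    intro t c hc x hx
    obtain ⟨x₀, hx₀, hmax, hs⟩ := exists_sSup_closure hΩne hΩb (slice_x c hc t).continuous
    rw [hs]; exact hmax x hx
  have hge_sInf : ∀ t : ℝ, ∀ (c : ℝ × (Fin 3 → ℝ) → ℝ), ContDiff ℝ ∞ c →
      ∀ x ∈ closure Ω, sInf ((fun y => c (t, y)) '' Ω) ≤ c (t, x) := by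
    intro t c hc x hx
    obtain ⟨x₀, hx₀, hmin, hs⟩ := exists_sInf_closure hΩne hΩb (slice_x c hc t).continuous
    rw [hs]; exact hmin x hx
  -- the PDEs in a uniform "signed" form
  have heq₁' : ∀ t ≥ (0:ℝ), ∀ x ∈ Ω,
      deriv (fun τ => c₁ (τ, x)) t + ∑ i, u (t, x) i * pd i (fun y => c₁ (t, y)) x =
        D₁ * ∑ i, pd i (fun y =>
          pd i (fun z => c₁ (t, z)) y + (1:ℝ) * (c₁ (t, y) * pd i (fun z => Φ (t, z)) y)) x := by
    intro t ht x hx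
    have := heq₁ t ht x hx
    simpa only [one_mul, mul_assoc] using this
  have heq₂' : ∀ t ≥ (0:ℝ), ∀ x ∈ Ω,
      deriv (fun τ => c₂ (τ, x)) t + ∑ i, u (t, x) i * pd i (fun y => c₂ (t, y)) x =
        D₂ * ∑ i, pd i (fun y =>
          pd i (fun z => c₂ (t, z)) y + (-1:ℝ) * (c₂ (t, y) * pd i (fun z => Φ (t, z)) y)) x := by
    intro t ht x hx
    have := heq₂ t ht x hx
    simpa only [neg_one_mul, ← sub_eq_add_neg] using this
  -- core computation: at an interior spatial critical point the PDE reduces to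
  -- `∂ₜc = D (Δc + s·c·ΔΦ)`
  have core : ∀ (c : ℝ × (Fin 3 → ℝ) → ℝ), ContDiff ℝ ∞ c → ∀ (D s : ℝ),
      (∀ t ≥ (0:ℝ), ∀ x ∈ Ω,
        deriv (fun τ => c (τ, x)) t + ∑ i, u (t, x) i * pd i (fun y => c (t, y)) x =
          D * ∑ i, pd i (fun y =>
            pd i (fun z => c (t, z)) y + s * (c (t, y) * pd i (fun z => Φ (t, z)) y)) x) →
      ∀ t x, 0 ≤ t → x ∈ Ω → (∀ i, pd i (fun y => c (t, y)) x = 0) →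
      deriv (fun τ => c (τ, x)) t =
        D * (lap (fun y => c (t, y)) x + s * (c (t, x) * lap (fun y => Φ (t, y)) x)) := by
    intro c hc D s heq t x ht hx hgrad
    have hcx : ContDiff ℝ ∞ (fun y => c (t, y)) := slice_x c hc t
    have hΦx : ContDiff ℝ ∞ (fun y => Φ (t, y)) := slice_x Φ hΦ t
    have hsum : ∀ i : Fin 3,
        pd i (fun y => pd i (fun z => c (t, z)) y
            + s * (c (t, y) * pd i (fun z => Φ (t, z)) y)) x
        = pd i (fun y => pd i (fun z => c (t, z)) y) x
            + s * (c (t, x) * pd i (fun y => pd i (fun z => Φ (t, z)) y) x) := by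
      intro i
      have h1 : DifferentiableAt ℝ (pd i (fun z => c (t, z))) x :=
        ((pd_smooth hcx i).differentiable aux_le1) x
      have h2 : DifferentiableAt ℝ (fun y => c (t, y)) x :=
        (hcx.differentiable aux_le1) x
      have h3 : DifferentiableAt ℝ (pd i (fun z => Φ (t, z))) x :=
        ((pd_smooth hΦx i).differentiable aux_le1) x
      have h4 : DifferentiableAt ℝ (fun y => c (t, y) * pd i (fun z => Φ (t, z)) y) x :=
        h2.mul h3
      have h5 : DifferentiableAt ℝ
          (fun y => s * (c (t, y) * pd i (fun z => Φ (t, z)) y)) x := h4.const_mul s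
      rw [pd_add h1 h5 i, pd_const_mul h4 s i, pd_mul h2 h3 i, hgrad i]
      ring
    have heqtx := heq t ht x hx
    have hzero : ∑ i, u (t, x) i * pd i (fun y => c (t, y)) x = 0 :=
      Finset.sum_eq_zero (fun i _ => by rw [hgrad i]; ring)
    rw [hzero, add_zero] at heqtx
    rw [heqtx]
    congr 1
    rw [Finset.sum_congr rfl (fun i _ => hsum i), Finset.sum_add_distrib]
    unfold lap
    rw [← Finset.mul_sum, ← Finset.mul_sum]
  have hQcpt : IsCompact (closure Ω) :=
    Metric.isCompact_of_isClosed_isBounded isClosed_closure hΩb.closure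
  -- ############ Nonnegativity of the concentrations ############
  have hnonneg : ∀ t ≥ (0:ℝ), ∀ x ∈ closure Ω, 0 ≤ c₁ (t, x) ∧ 0 ≤ c₂ (t, x) := by
    intro T hT xx hxx
    by_contra hcon
    have hneg : min (c₁ (T, xx)) (c₂ (T, xx)) < 0 := by
      rcases not_and_or.mp hcon with h | h <;> push_neg at h
      · exact lt_of_le_of_lt (min_le_left _ _) h
      · exact lt_of_le_of_lt (min_le_right _ _) h
    set S : Set (ℝ × (Fin 3 → ℝ)) := Icc (0:ℝ) T ×ˢ closure Ω with hSdef
    have hScpt : IsCompact S := isCompact_Icc.prod hQcpt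
    have hSne : S.Nonempty := ⟨(T, xx), ⟨⟨hT, le_refl T⟩, hxx⟩⟩
    -- a bound on |c₁ - c₂| over the slab
    have hcont12 : Continuous (fun q : ℝ × (Fin 3 → ℝ) => |c₁ q - c₂ q|) :=
      (hc₁.continuous.sub hc₂.continuous).abs
    obtain ⟨qB, hqB, hqBmax⟩ := hScpt.exists_isMaxOn hSne hcont12.continuousOn
    set B := |c₁ qB - c₂ qB| with hBdef
    have hB0 : 0 ≤ B := abs_nonneg _
    have hMB : 0 ≤ (max D₁ D₂) * B / ε := by
      apply div_nonneg _ hε.le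
      exact mul_nonneg (le_trans hD₁.le (le_max_left _ _)) hB0
    set lam := (max D₁ D₂) * B / ε + 1 with hlamdef
    have hlam0 : 0 < lam := by rw [hlamdef]; linarith
    set F : ℝ × (Fin 3 → ℝ) → ℝ :=
      fun q => Real.exp (-(lam * q.1)) * min (c₁ q) (c₂ q) with hFdef
    have hFc : Continuous F :=
      (Real.continuous_exp.comp ((continuous_const.mul continuous_fst)).neg).mul
        (hc₁.continuous.min hc₂.continuous)
    obtain ⟨qstar, hqstar, hqmin⟩ := hScpt.exists_isMinOn hSne hFc.continuousOn
    obtain ⟨tt, xs⟩ := qstar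
    obtain ⟨⟨htt0, httT⟩, hxscl⟩ : (0 ≤ tt ∧ tt ≤ T) ∧ xs ∈ closure Ω := hqstar
    have hFneg : F (tt, xs) < 0 := by
      have h1 : F (tt, xs) ≤ F (T, xx) := hqmin ⟨⟨hT, le_refl T⟩, hxx⟩
      have h2 : F (T, xx) < 0 :=
        mul_neg_of_pos_of_neg (Real.exp_pos _) hneg
      linarith
    have hminneg : min (c₁ (tt, xs)) (c₂ (tt, xs)) < 0 := by
      by_contra h
      push_neg at h
      have := mul_nonneg (Real.exp_pos (-(lam * tt))).le h
      simp only [hFdef] at hFneg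
      linarith
    have hxsΩ : xs ∈ Ω := by
      rcases mem_Omega_or_frontier hΩo hxscl with h | h
      · exact h
      · exfalso
        have h1 := hbc₁ tt htt0 xs h
        have h2 := hbc₂ tt htt0 xs h
        have h3 : 0 < min (c₁ (tt, xs)) (c₂ (tt, xs)) := by
          rw [h1, h2]; exact lt_min (hγ₁p xs h) (hγ₂p xs h)
        linarith
    have httpos : 0 < tt := by
      rcases eq_or_lt_of_le htt0 with h | h
      · exfalso
        have h1 : 0 ≤ min (c₁ (tt, xs)) (c₂ (tt, xs)) := by
          rw [← h]
          exact le_min (hc₁0 xs hxscl) (hc₂0 xs hxscl)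
        linarith
      · exact h
    -- generic contradiction at the negative interior minimum
    have inner : ∀ (c : ℝ × (Fin 3 → ℝ) → ℝ), ContDiff ℝ ∞ c → ∀ D s : ℝ, 0 < D →
        D ≤ max D₁ D₂ →
        (∀ t ≥ (0:ℝ), ∀ x ∈ Ω,
          deriv (fun τ => c (τ, x)) t + ∑ i, u (t, x) i * pd i (fun y => c (t, y)) x =
            D * ∑ i, pd i (fun y =>
              pd i (fun z => c (t, z)) y + s * (c (t, y) * pd i (fun z => Φ (t, z)) y)) x) →
        (∀ q : ℝ × (Fin 3 → ℝ), min (c₁ q) (c₂ q) ≤ c q) →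
        (c (tt, xs) = min (c₁ (tt, xs)) (c₂ (tt, xs))) →
        (0 ≤ s * lap (fun y => Φ (tt, y)) xs) →
        (s * lap (fun y => Φ (tt, y)) xs ≤ B / ε) → False := by
      intro c hc D s hD hDbnd heqc hmle hatt hsign hsbnd
      have hcstar_neg : c (tt, xs) < 0 := by rw [hatt]; exact hminneg
      -- spatial minimum
      have hminsp : ∀ y ∈ closure Ω, c (tt, xs) ≤ c (tt, y) := by
        intro y hy
        have h1 : F (tt, xs) ≤ F (tt, y) := hqmin ⟨⟨htt0, httT⟩, hy⟩
        have h2 : F (tt, y) ≤ Real.exp (-(lam * tt)) * c (tt, y) :=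
          mul_le_mul_of_nonneg_left (hmle (tt, y)) (Real.exp_pos _).le
        have h3 : F (tt, xs) = Real.exp (-(lam * tt)) * c (tt, xs) := by
          rw [hFdef, hatt]
        have h4 : Real.exp (-(lam * tt)) * c (tt, xs)
            ≤ Real.exp (-(lam * tt)) * c (tt, y) := by
          rw [← h3]; linarith
        exact le_of_mul_le_mul_left h4 (Real.exp_pos _)
      have hlocmin : IsLocalMin (fun y => c (tt, y)) xs := by
        have hnh : closure Ω ∈ 𝓝 xs := mem_nhds_iff.mpr ⟨Ω, subset_closure, hΩo, hxsΩ⟩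
        apply IsMinOn.isLocalMin _ hnh
        intro y hy
        exact hminsp y hy
      have hgrad : ∀ i, pd i (fun y => c (tt, y)) xs = 0 := by
        intro i
        have := hlocmin.fderiv_eq_zero
        simp [pd, this]
      have hlapc : 0 ≤ lap (fun y => c (tt, y)) xs :=
        lap_nonneg_of_min (slice_x c hc tt) hlocmin
      have hcore := core c hc D s heqc tt xs htt0 hxsΩ hgrad
      -- temporal minimum
      have hφd : HasDerivAt (fun τ => Real.exp (-(lam * τ)) * c (τ, xs))
          (Real.exp (-(lam * tt)) * (-lam) * c (tt, xs)
            + Real.exp (-(lam * tt)) * deriv (fun τ => c (τ, xs)) tt) tt := by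
        have h1 : HasDerivAt (fun τ : ℝ => -(lam * τ)) (-lam) tt := by
          simpa using ((hasDerivAt_id tt).const_mul lam).fun_neg
        have h2 : HasDerivAt (fun τ : ℝ => Real.exp (-(lam * τ)))
            (Real.exp (-(lam * tt)) * (-lam)) tt := h1.exp
        have h3 : HasDerivAt (fun τ => c (τ, xs)) (deriv (fun τ => c (τ, xs)) tt) tt :=
          ((slice_t c hc xs).differentiable aux_le1 tt).hasDerivAt
        exact h2.mul h3
      have hφmin : ∀ τ ∈ Icc (0:ℝ) tt,
          Real.exp (-(lam * tt)) * c (tt, xs) ≤ Real.exp (-(lam * τ)) * c (τ, xs) := by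
        intro τ hτ
        have hτS : (τ, xs) ∈ S := ⟨⟨hτ.1, le_trans hτ.2 httT⟩, hxscl⟩
        have h1 : F (tt, xs) ≤ F (τ, xs) := hqmin hτS
        have h2 : F (τ, xs) ≤ Real.exp (-(lam * τ)) * c (τ, xs) :=
          mul_le_mul_of_nonneg_left (hmle (τ, xs)) (Real.exp_pos _).le
        have h3 : F (tt, xs) = Real.exp (-(lam * tt)) * c (tt, xs) := by
          rw [hFdef, hatt]
        linarith
      have hderle : deriv (fun τ => Real.exp (-(lam * τ)) * c (τ, xs)) tt ≤ 0 :=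
        deriv_nonpos_of_left_min hφd.differentiableAt httpos hφmin
      rw [hφd.deriv] at hderle
      -- conclude ∂ₜc ≤ lam * c
      have hcPle : deriv (fun τ => c (τ, xs)) tt ≤ lam * c (tt, xs) := by
        nlinarith [Real.exp_pos (-(lam * tt))]
      -- lower bound on ∂ₜc from the equation
      have hXa : c (tt, xs) * (B / ε) ≤ c (tt, xs) * (s * lap (fun y => Φ (tt, y)) xs) :=
        mul_le_mul_of_nonpos_left hsbnd hcstar_neg.le
      have h6 : D * (c (tt, xs) * (B / ε)) ≤ deriv (fun τ => c (τ, xs)) tt := by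
        rw [hcore]
        nlinarith [mul_le_mul_of_nonneg_left hXa hD.le, mul_nonneg hD.le hlapc]
      have h8 : D * (B / ε) ≤ (max D₁ D₂) * B / ε := by
        rw [mul_div_assoc]
        apply mul_le_mul_of_nonneg_right hDbnd
        exact div_nonneg hB0 hε.le
      have h9 : D * (B / ε) < lam := by rw [hlamdef]; linarith
      have h10 : lam * c (tt, xs) < D * (B / ε) * c (tt, xs) :=
        mul_lt_mul_of_neg_right h9 hcstar_neg
      have h11 : D * (B / ε) * c (tt, xs) = D * (c (tt, xs) * (B / ε)) := by ring
      have hfinal : D * (c (tt, xs) * (B / ε)) < D * (c (tt, xs) * (B / ε)) := by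
        calc D * (c (tt, xs) * (B / ε)) ≤ deriv (fun τ => c (τ, xs)) tt := h6
        _ ≤ lam * c (tt, xs) := hcPle
        _ < D * (B / ε) * c (tt, xs) := h10
        _ = D * (c (tt, xs) * (B / ε)) := h11
      exact lt_irrefl _ hfinal
    rcases le_total (c₁ (tt, xs)) (c₂ (tt, xs)) with hcase | hcase
    · -- the minimum is attained by c₁ ; use s = 1
      have hpois' := hpois tt htt0 xs hxsΩ
      have hlapΦ : lap (fun y => Φ (tt, y)) xs = (c₂ (tt, xs) - c₁ (tt, xs)) / ε := by
        field_simp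
        linear_combination -hpois'
      have habs : |c₁ (tt, xs) - c₂ (tt, xs)| ≤ B := hqBmax ⟨⟨htt0, httT⟩, hxscl⟩
      obtain ⟨habs1, habs2⟩ := abs_le.mp habs
      apply inner c₁ hc₁ D₁ 1 hD₁ (le_max_left _ _) heq₁'
        (fun q => min_le_left _ _) (min_eq_left hcase).symm
      · rw [hlapΦ, one_mul]
        exact div_nonneg (by linarith) hε.le
      · rw [hlapΦ, one_mul]
        exact div_le_div_of_nonneg_right (by linarith) hε.le 
    · have hpois' := hpois tt htt0 xs hxsΩ
      have hlapΦ : lap (fun y => Φ (tt, y)) xs = (c₂ (tt, xs) - c₁ (tt, xs)) / ε := by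
        field_simp
        linear_combination -hpois'
      have habs : |c₁ (tt, xs) - c₂ (tt, xs)| ≤ B := hqBmax ⟨⟨htt0, httT⟩, hxscl⟩
      obtain ⟨habs1, habs2⟩ := abs_le.mp habs
      apply inner c₂ hc₂ D₂ (-1) hD₂ (le_max_right _ _) heq₂'
        (fun q => min_le_right _ _) (min_eq_right hcase).symm
      · rw [hlapΦ]
        have h9 : (-1 : ℝ) * ((c₂ (tt, xs) - c₁ (tt, xs)) / ε)
            = (c₁ (tt, xs) - c₂ (tt, xs)) / ε := by ring
        rw [h9]
        exact div_nonneg (by linarith) hε.le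
      · rw [hlapΦ]
        have h9 : (-1 : ℝ) * ((c₂ (tt, xs) - c₁ (tt, xs)) / ε)
            = (c₁ (tt, xs) - c₂ (tt, xs)) / ε := by ring
        rw [h9]
        exact div_le_div_of_nonneg_right (by linarith) hε.le
  -- ############ Slab maximum principle ############
  have slab_max : ∀ t₁ t₂ : ℝ, 0 ≤ t₁ → t₁ ≤ t₂ →
      max (sSup ((fun y => c₁ (t₂, y)) '' Ω)) (sSup ((fun y => c₂ (t₂, y)) '' Ω)) ≤
      max (sSup ((fun y => c₁ (t₁, y)) '' Ω)) (sSup ((fun y => c₂ (t₁, y)) '' Ω)) := by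
    intro t₁ t₂ ht₁ ht12
    by_contra hlt
    push_neg at hlt
    have ht12' : t₁ < t₂ := by
      rcases eq_or_lt_of_le ht12 with h | h
      · rw [h] at hlt; exact absurd hlt (lt_irrefl _)
      · exact h
    set M₁ := max (sSup ((fun y => c₁ (t₁, y)) '' Ω)) (sSup ((fun y => c₂ (t₁, y)) '' Ω))
      with hM₁def
    set M₂ := max (sSup ((fun y => c₁ (t₂, y)) '' Ω)) (sSup ((fun y => c₂ (t₂, y)) '' Ω))
      with hM₂def
    set σ := (M₂ - M₁) / (2 * (t₂ - t₁)) with hσdef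
    have hσpos : 0 < σ := by
      rw [hσdef]; apply div_pos (by linarith) (by linarith)
    have hσΔ : σ * (t₂ - t₁) = (M₂ - M₁) / 2 := by
      have h0 : t₂ - t₁ ≠ 0 := sub_ne_zero.mpr (ne_of_gt ht12')
      rw [hσdef]; field_simp
    set S : Set (ℝ × (Fin 3 → ℝ)) := Icc t₁ t₂ ×ˢ closure Ω with hSdef
    have hScpt : IsCompact S := isCompact_Icc.prod hQcpt
    have hSne : S.Nonempty := by
      obtain ⟨z, hz⟩ := hΩne
      exact ⟨(t₁, z), ⟨⟨le_refl t₁, ht12⟩, subset_closure hz⟩⟩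
    set F : ℝ × (Fin 3 → ℝ) → ℝ :=
      fun q => max (c₁ q) (c₂ q) - σ * (q.1 - t₁) with hFdef
    have hFc : Continuous F :=
      (hc₁.continuous.max hc₂.continuous).sub
        ((continuous_const.mul (continuous_fst.sub continuous_const)))
    obtain ⟨qstar, hqstar, hqmax⟩ := hScpt.exists_isMaxOn hSne hFc.continuousOn
    obtain ⟨tt, xs⟩ := qstar
    obtain ⟨⟨htt1, httT⟩, hxscl⟩ : (t₁ ≤ tt ∧ tt ≤ t₂) ∧ xs ∈ closure Ω := hqstar
    have htt0 : 0 ≤ tt := le_trans ht₁ htt1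
    -- the max of F is bigger than M₁
    have hM2att : ∃ x₀ ∈ closure Ω, M₂ ≤ max (c₁ (t₂, x₀)) (c₂ (t₂, x₀)) := by
      rcases le_total (sSup ((fun y => c₁ (t₂, y)) '' Ω))
          (sSup ((fun y => c₂ (t₂, y)) '' Ω)) with hmx | hmx
      · obtain ⟨x₀, hx₀, _, hs⟩ := exists_sSup_closure hΩne hΩb (slice_x c₂ hc₂ t₂).continuous
        refine ⟨x₀, hx₀, ?_⟩
        rw [hM₂def, max_eq_right hmx, hs]
        exact le_max_right _ _
      · obtain ⟨x₀, hx₀, _, hs⟩ := exists_sSup_closure hΩne hΩb (slice_x c₁ hc₁ t₂).continuous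
        refine ⟨x₀, hx₀, ?_⟩
        rw [hM₂def, max_eq_left hmx, hs]
        exact le_max_left _ _
    have hFbig : (M₁ + M₂) / 2 ≤ F (tt, xs) := by
      obtain ⟨x₀, hx₀, hx₀v⟩ := hM2att
      have h1 : F (t₂, x₀) ≤ F (tt, xs) := hqmax ⟨⟨ht12, le_refl t₂⟩, hx₀⟩
      have h2 : (M₁ + M₂) / 2 ≤ F (t₂, x₀) := by
        have hev : F (t₂, x₀) = max (c₁ (t₂, x₀)) (c₂ (t₂, x₀)) - σ * (t₂ - t₁) := rfl
        rw [hev]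
        linarith [hσΔ, hx₀v]
      exact le_trans h2 h1
    have hFM1 : M₁ < F (tt, xs) :=
      lt_of_lt_of_le (by linarith) hFbig
    -- pointwise values at time t₁ are at most M₁
    have hptM1 : ∀ y ∈ closure Ω, max (c₁ (t₁, y)) (c₂ (t₁, y)) ≤ M₁ := by
      intro y hy
      rw [hM₁def]
      exact max_le_max (hle_sSup t₁ c₁ hc₁ y hy) (hle_sSup t₁ c₂ hc₂ y hy)
    -- boundary exclusion
    have hxsΩ : xs ∈ Ω := by
      rcases mem_Omega_or_frontier hΩo hxscl with h | h
      · exact h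
      · exfalso
        have h1 : c₁ (tt, xs) = c₁ (t₁, xs) := by
          rw [hbc₁ tt htt0 xs h, hbc₁ t₁ ht₁ xs h]
        have h2 : c₂ (tt, xs) = c₂ (t₁, xs) := by
          rw [hbc₂ tt htt0 xs h, hbc₂ t₁ ht₁ xs h]
        have hev : F (tt, xs) = max (c₁ (tt, xs)) (c₂ (tt, xs)) - σ * (tt - t₁) := rfl
        have h3 : max (c₁ (tt, xs)) (c₂ (tt, xs)) ≤ M₁ := by
          rw [h1, h2]; exact hptM1 xs hxscl
        have h4 : 0 ≤ σ * (tt - t₁) := mul_nonneg hσpos.le (by linarith)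
        rw [hev] at hFM1
        linarith
    -- temporal exclusion
    have htt1' : t₁ < tt := by
      rcases eq_or_lt_of_le htt1 with h | h
      · exfalso
        have hev : F (tt, xs) = max (c₁ (tt, xs)) (c₂ (tt, xs)) - σ * (tt - t₁) := rfl
        rw [hev, ← h] at hFM1
        have h3 := hptM1 xs hxscl
        simp only [sub_self, mul_zero, sub_zero] at hFM1
        linarith
      · exact h
    -- generic contradiction at the interior maximum
    have inner : ∀ (c : ℝ × (Fin 3 → ℝ) → ℝ), ContDiff ℝ ∞ c → ∀ D s : ℝ, 0 < D →
        (∀ t ≥ (0:ℝ), ∀ x ∈ Ω,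
          deriv (fun τ => c (τ, x)) t + ∑ i, u (t, x) i * pd i (fun y => c (t, y)) x =
            D * ∑ i, pd i (fun y =>
              pd i (fun z => c (t, z)) y + s * (c (t, y) * pd i (fun z => Φ (t, z)) y)) x) →
        (∀ q : ℝ × (Fin 3 → ℝ), c q ≤ max (c₁ q) (c₂ q)) →
        (c (tt, xs) = max (c₁ (tt, xs)) (c₂ (tt, xs))) →
        (s * (c (tt, xs) * lap (fun y => Φ (tt, y)) xs) ≤ 0) → False := by
      intro c hc D s hD heqc hmle hatt hprod
      -- spatial maximum
      have hmaxsp : ∀ y ∈ closure Ω, c (tt, y) ≤ c (tt, xs) := by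
        intro y hy
        have h1 : F (tt, y) ≤ F (tt, xs) := hqmax ⟨⟨htt1, httT⟩, hy⟩
        have hev1 : F (tt, y) = max (c₁ (tt, y)) (c₂ (tt, y)) - σ * (tt - t₁) := rfl
        have hev2 : F (tt, xs) = max (c₁ (tt, xs)) (c₂ (tt, xs)) - σ * (tt - t₁) := rfl
        have h2 : c (tt, y) ≤ max (c₁ (tt, y)) (c₂ (tt, y)) := hmle (tt, y)
        rw [hev1, hev2] at h1
        rw [hatt]
        linarith
      have hlocmax : IsLocalMax (fun y => c (tt, y)) xs := by
        have hnh : closure Ω ∈ 𝓝 xs := mem_nhds_iff.mpr ⟨Ω, subset_closure, hΩo, hxsΩ⟩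
        apply IsMaxOn.isLocalMax _ hnh
        intro y hy
        exact hmaxsp y hy
      have hgrad : ∀ i, pd i (fun y => c (tt, y)) xs = 0 := by
        intro i
        have := hlocmax.fderiv_eq_zero
        simp [pd, this]
      have hlapc : lap (fun y => c (tt, y)) xs ≤ 0 :=
        lap_nonpos_of_max (slice_x c hc tt) hlocmax
      have hcore := core c hc D s heqc tt xs htt0 hxsΩ hgrad
      -- temporal maximum
      have hφd : HasDerivAt (fun τ => c (τ, xs) - σ * (τ - t₁))
          (deriv (fun τ => c (τ, xs)) tt - σ) tt := by
        have h3 : HasDerivAt (fun τ => c (τ, xs)) (deriv (fun τ => c (τ, xs)) tt) tt :=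
          ((slice_t c hc xs).differentiable aux_le1 tt).hasDerivAt
        have h4 : HasDerivAt (fun τ : ℝ => σ * (τ - t₁)) σ tt := by
          simpa using ((hasDerivAt_id tt).sub_const t₁).const_mul σ
        exact h3.sub h4
      have hφmax : ∀ τ ∈ Icc t₁ tt,
          c (τ, xs) - σ * (τ - t₁) ≤ c (tt, xs) - σ * (tt - t₁) := by
        intro τ hτ
        have hτS : (τ, xs) ∈ S := ⟨⟨hτ.1, le_trans hτ.2 httT⟩, hxscl⟩
        have h1 : F (τ, xs) ≤ F (tt, xs) := hqmax hτS
        have hev1 : F (τ, xs) = max (c₁ (τ, xs)) (c₂ (τ, xs)) - σ * (τ - t₁) := rfl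
        have hev2 : F (tt, xs) = max (c₁ (tt, xs)) (c₂ (tt, xs)) - σ * (tt - t₁) := rfl
        have h2 : c (τ, xs) ≤ max (c₁ (τ, xs)) (c₂ (τ, xs)) := hmle (τ, xs)
        rw [hev1, hev2] at h1
        rw [hatt]
        linarith
      have hderge : 0 ≤ deriv (fun τ => c (τ, xs) - σ * (τ - t₁)) tt :=
        deriv_nonneg_of_left_max hφd.differentiableAt htt1' hφmax
      rw [hφd.deriv] at hderge
      -- the equation gives a nonpositive time derivative
      have h5 : D * (s * (c (tt, xs) * lap (fun y => Φ (tt, y)) xs)) ≤ 0 :=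
        mul_nonpos_of_nonneg_of_nonpos hD.le hprod
      have h6 : D * lap (fun y => c (tt, y)) xs ≤ 0 :=
        mul_nonpos_of_nonneg_of_nonpos hD.le hlapc
      have h7 : deriv (fun τ => c (τ, xs)) tt ≤ 0 := by
        rw [hcore, mul_add]
        linarith
      linarith
    -- case split on which concentration attains the max
    rcases le_total (c₂ (tt, xs)) (c₁ (tt, xs)) with hcase | hcase
    · -- the max is attained by c₁ ; use s = 1
      have hpois' := hpois tt htt0 xs hxsΩ
      have hlapΦ : lap (fun y => Φ (tt, y)) xs = (c₂ (tt, xs) - c₁ (tt, xs)) / ε := by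
        field_simp
        linear_combination -hpois'
      have hnn : 0 ≤ c₁ (tt, xs) := (hnonneg tt htt0 xs hxscl).1
      apply inner c₁ hc₁ D₁ 1 hD₁ heq₁' (fun q => le_max_left _ _) (max_eq_left hcase).symm
      rw [hlapΦ, one_mul]
      apply mul_nonpos_of_nonneg_of_nonpos hnn
      apply div_nonpos_of_nonpos_of_nonneg (by linarith) hε.le
    · have hpois' := hpois tt htt0 xs hxsΩ
      have hlapΦ : lap (fun y => Φ (tt, y)) xs = (c₂ (tt, xs) - c₁ (tt, xs)) / ε := by
        field_simp
        linear_combination -hpois'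
      have hnn : 0 ≤ c₂ (tt, xs) := (hnonneg tt htt0 xs hxscl).2
      apply inner c₂ hc₂ D₂ (-1) hD₂ heq₂' (fun q => le_max_right _ _)
        (max_eq_right hcase).symm
      rw [hlapΦ]
      have h9 : (-1 : ℝ) * (c₂ (tt, xs) * ((c₂ (tt, xs) - c₁ (tt, xs)) / ε))
          = c₂ (tt, xs) * ((c₁ (tt, xs) - c₂ (tt, xs)) / ε) := by ring
      rw [h9]
      apply mul_nonpos_of_nonneg_of_nonpos hnn
      apply div_nonpos_of_nonpos_of_nonneg (by linarith) hε.le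
  -- ############ Slab minimum principle ############
  have slab_min : ∀ t₁ t₂ : ℝ, 0 ≤ t₁ → t₁ ≤ t₂ →
      min (sInf ((fun y => c₁ (t₁, y)) '' Ω)) (sInf ((fun y => c₂ (t₁, y)) '' Ω)) ≤
      min (sInf ((fun y => c₁ (t₂, y)) '' Ω)) (sInf ((fun y => c₂ (t₂, y)) '' Ω)) := by
    intro t₁ t₂ ht₁ ht12
    by_contra hlt
    push_neg at hlt
    have ht12' : t₁ < t₂ := by
      rcases eq_or_lt_of_le ht12 with h | h
      · rw [h] at hlt; exact absurd hlt (lt_irrefl _)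
      · exact h
    set m₁ := min (sInf ((fun y => c₁ (t₁, y)) '' Ω)) (sInf ((fun y => c₂ (t₁, y)) '' Ω))
      with hm₁def
    set m₂ := min (sInf ((fun y => c₁ (t₂, y)) '' Ω)) (sInf ((fun y => c₂ (t₂, y)) '' Ω))
      with hm₂def
    set σ := (m₁ - m₂) / (2 * (t₂ - t₁)) with hσdef
    have hσpos : 0 < σ := by
      rw [hσdef]; apply div_pos (by linarith) (by linarith)
    have hσΔ : σ * (t₂ - t₁) = (m₁ - m₂) / 2 := by
      have h0 : t₂ - t₁ ≠ 0 := sub_ne_zero.mpr (ne_of_gt ht12')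
      rw [hσdef]; field_simp
    set S : Set (ℝ × (Fin 3 → ℝ)) := Icc t₁ t₂ ×ˢ closure Ω with hSdef
    have hScpt : IsCompact S := isCompact_Icc.prod hQcpt
    have hSne : S.Nonempty := by
      obtain ⟨z, hz⟩ := hΩne
      exact ⟨(t₁, z), ⟨⟨le_refl t₁, ht12⟩, subset_closure hz⟩⟩
    set F : ℝ × (Fin 3 → ℝ) → ℝ :=
      fun q => min (c₁ q) (c₂ q) + σ * (q.1 - t₁) with hFdef
    have hFc : Continuous F :=
      (hc₁.continuous.min hc₂.continuous).add
        ((continuous_const.mul (continuous_fst.sub continuous_const)))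
    obtain ⟨qstar, hqstar, hqmin⟩ := hScpt.exists_isMinOn hSne hFc.continuousOn
    obtain ⟨tt, xs⟩ := qstar
    obtain ⟨⟨htt1, httT⟩, hxscl⟩ : (t₁ ≤ tt ∧ tt ≤ t₂) ∧ xs ∈ closure Ω := hqstar
    have htt0 : 0 ≤ tt := le_trans ht₁ htt1
    have hm2att : ∃ x₀ ∈ closure Ω, min (c₁ (t₂, x₀)) (c₂ (t₂, x₀)) ≤ m₂ := by
      rcases le_total (sInf ((fun y => c₁ (t₂, y)) '' Ω))
          (sInf ((fun y => c₂ (t₂, y)) '' Ω)) with hmx | hmx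
      · obtain ⟨x₀, hx₀, _, hs⟩ := exists_sInf_closure hΩne hΩb (slice_x c₁ hc₁ t₂).continuous
        refine ⟨x₀, hx₀, ?_⟩
        rw [hm₂def, min_eq_left hmx, hs]
        exact min_le_left _ _
      · obtain ⟨x₀, hx₀, _, hs⟩ := exists_sInf_closure hΩne hΩb (slice_x c₂ hc₂ t₂).continuous
        refine ⟨x₀, hx₀, ?_⟩
        rw [hm₂def, min_eq_right hmx, hs]
        exact min_le_right _ _
    have hFsmall : F (tt, xs) ≤ (m₁ + m₂) / 2 := by
      obtain ⟨x₀, hx₀, hx₀v⟩ := hm2att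
      have h1 : F (tt, xs) ≤ F (t₂, x₀) := hqmin ⟨⟨ht12, le_refl t₂⟩, hx₀⟩
      have h2 : F (t₂, x₀) ≤ (m₁ + m₂) / 2 := by
        have hev : F (t₂, x₀) = min (c₁ (t₂, x₀)) (c₂ (t₂, x₀)) + σ * (t₂ - t₁) := rfl
        rw [hev]
        linarith [hσΔ, hx₀v]
      exact le_trans h1 h2
    have hFm1 : F (tt, xs) < m₁ :=
      lt_of_le_of_lt hFsmall (by linarith)
    have hptm1 : ∀ y ∈ closure Ω, m₁ ≤ min (c₁ (t₁, y)) (c₂ (t₁, y)) := by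
      intro y hy
      rw [hm₁def]
      exact min_le_min (hge_sInf t₁ c₁ hc₁ y hy) (hge_sInf t₁ c₂ hc₂ y hy)
    have hxsΩ : xs ∈ Ω := by
      rcases mem_Omega_or_frontier hΩo hxscl with h | h
      · exact h
      · exfalso
        have h1 : c₁ (tt, xs) = c₁ (t₁, xs) := by
          rw [hbc₁ tt htt0 xs h, hbc₁ t₁ ht₁ xs h]
        have h2 : c₂ (tt, xs) = c₂ (t₁, xs) := by
          rw [hbc₂ tt htt0 xs h, hbc₂ t₁ ht₁ xs h]
        have hev : F (tt, xs) = min (c₁ (tt, xs)) (c₂ (tt, xs)) + σ * (tt - t₁) := rfl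
        have h3 : m₁ ≤ min (c₁ (tt, xs)) (c₂ (tt, xs)) := by
          rw [h1, h2]; exact hptm1 xs hxscl
        have h4 : 0 ≤ σ * (tt - t₁) := mul_nonneg hσpos.le (by linarith)
        rw [hev] at hFm1
        linarith
    have htt1' : t₁ < tt := by
      rcases eq_or_lt_of_le htt1 with h | h
      · exfalso
        have hev : F (tt, xs) = min (c₁ (tt, xs)) (c₂ (tt, xs)) + σ * (tt - t₁) := rfl
        rw [hev, ← h] at hFm1
        have h3 := hptm1 xs hxscl
        simp only [sub_self, mul_zero, add_zero] at hFm1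
        linarith
      · exact h
    have inner : ∀ (c : ℝ × (Fin 3 → ℝ) → ℝ), ContDiff ℝ ∞ c → ∀ D s : ℝ, 0 < D →
        (∀ t ≥ (0:ℝ), ∀ x ∈ Ω,
          deriv (fun τ => c (τ, x)) t + ∑ i, u (t, x) i * pd i (fun y => c (t, y)) x =
            D * ∑ i, pd i (fun y =>
              pd i (fun z => c (t, z)) y + s * (c (t, y) * pd i (fun z => Φ (t, z)) y)) x) →
        (∀ q : ℝ × (Fin 3 → ℝ), min (c₁ q) (c₂ q) ≤ c q) →
        (c (tt, xs) = min (c₁ (tt, xs)) (c₂ (tt, xs))) →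
        (0 ≤ s * (c (tt, xs) * lap (fun y => Φ (tt, y)) xs)) → False := by
      intro c hc D s hD heqc hmle hatt hprod
      have hminsp : ∀ y ∈ closure Ω, c (tt, xs) ≤ c (tt, y) := by
        intro y hy
        have h1 : F (tt, xs) ≤ F (tt, y) := hqmin ⟨⟨htt1, httT⟩, hy⟩
        have hev1 : F (tt, y) = min (c₁ (tt, y)) (c₂ (tt, y)) + σ * (tt - t₁) := rfl
        have hev2 : F (tt, xs) = min (c₁ (tt, xs)) (c₂ (tt, xs)) + σ * (tt - t₁) := rfl
        have h2 : min (c₁ (tt, y)) (c₂ (tt, y)) ≤ c (tt, y) := hmle (tt, y)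
        rw [hev1, hev2] at h1
        rw [hatt]
        linarith
      have hlocmin : IsLocalMin (fun y => c (tt, y)) xs := by
        have hnh : closure Ω ∈ 𝓝 xs := mem_nhds_iff.mpr ⟨Ω, subset_closure, hΩo, hxsΩ⟩
        apply IsMinOn.isLocalMin _ hnh
        intro y hy
        exact hminsp y hy
      have hgrad : ∀ i, pd i (fun y => c (tt, y)) xs = 0 := by
        intro i
        have := hlocmin.fderiv_eq_zero
        simp [pd, this]
      have hlapc : 0 ≤ lap (fun y => c (tt, y)) xs :=
        lap_nonneg_of_min (slice_x c hc tt) hlocmin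
      have hcore := core c hc D s heqc tt xs htt0 hxsΩ hgrad
      have hφd : HasDerivAt (fun τ => c (τ, xs) + σ * (τ - t₁))
          (deriv (fun τ => c (τ, xs)) tt + σ) tt := by
        have h3 : HasDerivAt (fun τ => c (τ, xs)) (deriv (fun τ => c (τ, xs)) tt) tt :=
          ((slice_t c hc xs).differentiable aux_le1 tt).hasDerivAt
        have h4 : HasDerivAt (fun τ : ℝ => σ * (τ - t₁)) σ tt := by
          simpa using ((hasDerivAt_id tt).sub_const t₁).const_mul σ
        exact h3.add h4
      have hφmin : ∀ τ ∈ Icc t₁ tt,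
          c (tt, xs) + σ * (tt - t₁) ≤ c (τ, xs) + σ * (τ - t₁) := by
        intro τ hτ
        have hτS : (τ, xs) ∈ S := ⟨⟨hτ.1, le_trans hτ.2 httT⟩, hxscl⟩
        have h1 : F (tt, xs) ≤ F (τ, xs) := hqmin hτS
        have hev1 : F (τ, xs) = min (c₁ (τ, xs)) (c₂ (τ, xs)) + σ * (τ - t₁) := rfl
        have hev2 : F (tt, xs) = min (c₁ (tt, xs)) (c₂ (tt, xs)) + σ * (tt - t₁) := rfl
        have h2 : min (c₁ (τ, xs)) (c₂ (τ, xs)) ≤ c (τ, xs) := hmle (τ, xs)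
        rw [hev1, hev2] at h1
        rw [hatt]
        linarith
      have hderle : deriv (fun τ => c (τ, xs) + σ * (τ - t₁)) tt ≤ 0 :=
        deriv_nonpos_of_left_min hφd.differentiableAt htt1' hφmin
      rw [hφd.deriv] at hderle
      have h5 : 0 ≤ D * (s * (c (tt, xs) * lap (fun y => Φ (tt, y)) xs)) :=
        mul_nonneg hD.le hprod
      have h6 : 0 ≤ D * lap (fun y => c (tt, y)) xs :=
        mul_nonneg hD.le hlapc
      have h7 : 0 ≤ deriv (fun τ => c (τ, xs)) tt := by
        rw [hcore, mul_add]
        linarith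
      linarith
    rcases le_total (c₁ (tt, xs)) (c₂ (tt, xs)) with hcase | hcase
    · have hpois' := hpois tt htt0 xs hxsΩ
      have hlapΦ : lap (fun y => Φ (tt, y)) xs = (c₂ (tt, xs) - c₁ (tt, xs)) / ε := by
        field_simp
        linear_combination -hpois'
      have hnn : 0 ≤ c₁ (tt, xs) := (hnonneg tt htt0 xs hxscl).1
      apply inner c₁ hc₁ D₁ 1 hD₁ heq₁' (fun q => min_le_left _ _) (min_eq_left hcase).symm
      rw [hlapΦ, one_mul]
      apply mul_nonneg hnn
      apply div_nonneg (by linarith) hε.le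
    · have hpois' := hpois tt htt0 xs hxsΩ
      have hlapΦ : lap (fun y => Φ (tt, y)) xs = (c₂ (tt, xs) - c₁ (tt, xs)) / ε := by
        field_simp
        linear_combination -hpois'
      have hnn : 0 ≤ c₂ (tt, xs) := (hnonneg tt htt0 xs hxscl).2
      apply inner c₂ hc₂ D₂ (-1) hD₂ heq₂' (fun q => min_le_right _ _)
        (min_eq_right hcase).symm
      rw [hlapΦ]
      have h9 : (-1 : ℝ) * (c₂ (tt, xs) * ((c₂ (tt, xs) - c₁ (tt, xs)) / ε))
          = c₂ (tt, xs) * ((c₁ (tt, xs) - c₂ (tt, xs)) / ε) := by ring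
      rw [h9]
      apply mul_nonneg hnn
      apply div_nonneg (by linarith) hε.le
  -- ############ Assembly ############
  refine ⟨?_, ?_, ?_⟩
  · intro t ht x hx c hcmem
    have hmono_max := slab_max 0 t (le_refl 0) ht
    have hmono_min := slab_min 0 t (le_refl 0) ht
    simp only [Set.mem_insert_iff, Set.mem_singleton_iff] at hcmem
    constructor
    · -- lower bound
      have h2 : min (sInf ((fun y => c₁ (t, y)) '' Ω)) (sInf ((fun y => c₂ (t, y)) '' Ω))
          ≤ c (t, x) := by
        rcases hcmem with rfl | rfl
        · exact le_trans (min_le_left _ _) (hge_sInf t c hc₁ x hx)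
        · exact le_trans (min_le_right _ _) (hge_sInf t c hc₂ x hx)
      exact le_trans (min_le_left _ _) (le_trans hmono_min h2)
    · -- upper bound
      have h2 : c (t, x)
          ≤ max (sSup ((fun y => c₁ (t, y)) '' Ω)) (sSup ((fun y => c₂ (t, y)) '' Ω)) := by
        rcases hcmem with rfl | rfl
        · exact le_trans (hle_sSup t c hc₁ x hx) (le_max_left _ _)
        · exact le_trans (hle_sSup t c hc₂ x hx) (le_max_right _ _)
      exact le_trans h2 (le_trans hmono_max (le_max_left _ _))
  · intro a ha b hb hab
    exact slab_max a b (le_of_lt ha) hab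
  · intro a ha b hb hab
    exact slab_min a b (le_of_lt ha) hab
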